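/- Let |1⟩,|2⟩,|3⟩ be the standard orthonormal basis of ℂ³ and |ψ⟩ = (|1⟩+|2⟩+|3⟩)/√3. Define A_i = (1/2)(1 − |i⟩⟨i|) for i = 1,2,3, B_1 = (1/2)|ψ⟩⟨ψ|, B_2 = 1 − B_1, and the 5-tuple M = ((1/2)|1⟩⟨1|, (1/2)|2⟩⟨2|, (1/2)|3⟩⟨3|, B_1, (1/2)·1 − B_1). Then M is a 5-outcome POVM, and for every subset X ⊆ {1,2,3} there is a subset Z ⊆ {1,…,5} with ∑_{i∈X} A_i = ∑_{l∈Z} M_l, and for every subset Y ⊆ {1,2} there is a subset Z' ⊆ {1,…,5} with ∑_{j∈Y} B_j = ∑_{l∈Z'} M_l. In particular, the POVMs A = (A_1,A_2,A_3) and B = (B_1,B_2) are coexistent. -/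

import Mathlib

open Matrix Finset
open scoped ComplexOrder

/-- An effect on `ℂ^d`: a matrix `E` with `0 ≤ E ≤ 1`, i.e. both `E` and `1 - E`
are positive semidefinite. -/
def IsEffect {d : ℕ} (E : Matrix (Fin d) (Fin d) ℂ) : Prop :=
  E.PosSemidef ∧ (1 - E).PosSemidef

/-- An `n`-outcome POVM: a tuple of effects summing to the identity. -/
def IsPOVM {d n : ℕ} (A : Fin n → Matrix (Fin d) (Fin d) ℂ) : Prop :=
  (∀ k, IsEffect (A k)) ∧ ∑ k, A k = 1

/-- Two finite POVMs are coexistent if their ranges (sums of effects over arbitrary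
outcome subsets) are contained in the range of a single POVM `M`. -/
def Coexistent {d n m : ℕ} (A : Fin n → Matrix (Fin d) (Fin d) ℂ)
    (B : Fin m → Matrix (Fin d) (Fin d) ℂ) : Prop :=
  ∃ (N : ℕ) (M : Fin N → Matrix (Fin d) (Fin d) ℂ), IsPOVM M ∧
    (∀ X : Finset (Fin n), ∃ Z : Finset (Fin N), ∑ k ∈ X, A k = ∑ l ∈ Z, M l) ∧
    (∀ Y : Finset (Fin m), ∃ Z : Finset (Fin N), ∑ j ∈ Y, B j = ∑ l ∈ Z, M l)

/-- Two finite POVMs are jointly measurable if they are the margins of a single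
POVM `J` indexed by pairs of outcomes. -/
def JointlyMeasurable {d n m : ℕ} (A : Fin n → Matrix (Fin d) (Fin d) ℂ)
    (B : Fin m → Matrix (Fin d) (Fin d) ℂ) : Prop :=
  ∃ J : Fin n → Fin m → Matrix (Fin d) (Fin d) ℂ,
    (∀ k j, (J k j).PosSemidef) ∧
    (∀ k, ∑ j, J k j = A k) ∧
    (∀ j, ∑ k, J k j = B j)

/-- The unit vector `|ψ⟩ = (|1⟩ + |2⟩ + |3⟩)/√3` in `ℂ³`. -/
noncomputable def ψ : Fin 3 → ℂ := fun _ => 1 / (Real.sqrt 3 : ℂ)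

/-- The effects `A_i = (1/2)(1 - |i⟩⟨i|)` on `ℂ³`. -/
noncomputable def Aeff (i : Fin 3) : Matrix (Fin 3) (Fin 3) ℂ :=
  (1 / 2 : ℂ) • (1 - Matrix.single i i 1)

/-- The effect `B_1 = (1/2)|ψ⟩⟨ψ|` on `ℂ³`. -/
noncomputable def Beff : Matrix (Fin 3) (Fin 3) ℂ :=
  (1 / 2 : ℂ) • Matrix.vecMulVec ψ (star ψ)

/-- The 5-outcome observable `M` whose range contains all effects of `A` and `B`. -/
noncomputable def Mobs : Fin 5 → Matrix (Fin 3) (Fin 3) ℂ :=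
  ![(1 / 2 : ℂ) • Matrix.single 0 0 1,
    (1 / 2 : ℂ) • Matrix.single 1 1 1,
    (1 / 2 : ℂ) • Matrix.single 2 2 1,
    Beff,
    (1 / 2 : ℂ) • 1 - Beff]

/-!
The effects of `M` are halves of orthogonal projections (onto `|1⟩`, `|2⟩`, `|3⟩`, onto `|ψ⟩` and
onto its orthogonal complement) and sum to `1`, so `M` is a POVM. The set of subset-sums of a POVM
is closed under `E ↦ 1 - E`, and since `A` and `B` have at most three outcomes, every set of
outcomes or its complement has at most one element. So it suffices to write each single effect as
a subset-sum of `M`: `A_i = M_j + M_k` for `{i, j, k} = {1, 2, 3}`, `B_1 = M_4` and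
`B_2 = 1 - M_4 = M_1 + M_2 + M_3 + M_5`.
-/

theorem sum_compl_eq_sub_of_sum_eq {ι G : Type*} [Fintype ι] [DecidableEq ι] [AddCommGroup G]
    {f : ι → G} {u : G} (hf : ∑ i, f i = u) (s : Finset ι) :
    ∑ i ∈ sᶜ, f i = u - ∑ i ∈ s, f i :=
  eq_sub_of_add_eq (hf ▸ sum_compl_add_sum s f)

theorem exists_sum_eq_sum_of_card_le_three {ι κ G : Type*} [Fintype ι] [DecidableEq ι]
    [Fintype κ] [DecidableEq κ] [AddCommGroup G] {u : G} {A : ι → G} {M : κ → G}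
    (hι : Fintype.card ι ≤ 3) (hA : ∑ i, A i = u) (hM : ∑ l, M l = u)
    (hsingle : ∀ i, ∃ Z : Finset κ, A i = ∑ l ∈ Z, M l) (X : Finset ι) :
    ∃ Z : Finset κ, ∑ i ∈ X, A i = ∑ l ∈ Z, M l := by
  have of_card_le_one (Y : Finset ι) (hY : #Y ≤ 1) :
      ∃ Z : Finset κ, ∑ i ∈ Y, A i = ∑ l ∈ Z, M l := by
    interval_cases h : #Y
    · exact ⟨∅, by simp [card_eq_zero.mp h]⟩
    · obtain ⟨i, rfl⟩ := card_eq_one.mp h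
      simpa using hsingle i
  -- Either `X` or its complement has at most one element; pass to complements in both sums.
  rcases le_or_gt #X 1 with hX | hX
  · exact of_card_le_one X hX
  · obtain ⟨Z, hZ⟩ := of_card_le_one Xᶜ (by rw [card_compl]; omega)
    refine ⟨Zᶜ, ?_⟩
    rw [sum_compl_eq_sub_of_sum_eq hM, ← hZ, sum_compl_eq_sub_of_sum_eq hA, sub_sub_cancel]

section Projections

open scoped MatrixOrder

variable {n : Type*} [Fintype n]

theorem isStarProjection_single_one [DecidableEq n] (i : n) :
    IsStarProjection (single i i (1 : ℂ)) :=
  ⟨by rw [IsIdempotentElem, single_mul_single_same, one_mul],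
    by rw [IsSelfAdjoint, star_eq_conjTranspose, conjTranspose_single, star_one]⟩

theorem isStarProjection_vecMulVec_star {v : n → ℂ} (hv : star v ⬝ᵥ v = 1) :
    IsStarProjection (vecMulVec v (star v)) :=
  ⟨by rw [IsIdempotentElem, vecMulVec_mul_vecMulVec, hv, one_smul],
    by rw [IsSelfAdjoint, star_eq_conjTranspose, conjTranspose_vecMulVec, star_star]⟩

theorem IsStarProjection.posSemidef_smul {P : Matrix n n ℂ} (hP : IsStarProjection P) {c : ℂ}
    (hc : 0 ≤ c) : (c • P).PosSemidef :=
  hP.nonneg.posSemidef.smul hc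

end Projections

theorem isPOVM_of_posSemidef {d n : ℕ} {M : Fin n → Matrix (Fin d) (Fin d) ℂ}
    (hpsd : ∀ k, (M k).PosSemidef) (hsum : ∑ k, M k = 1) : IsPOVM M := by
  refine ⟨fun k => ⟨hpsd k, ?_⟩, hsum⟩
  rw [← sum_singleton M k, ← sum_compl_eq_sub_of_sum_eq hsum]
  exact posSemidef_sum _ fun l _ => hpsd l

theorem star_ψ_dotProduct_ψ : star ψ ⬝ᵥ ψ = 1 := by
  have h3 : (Real.sqrt 3 : ℂ) ^ 2 = 3 := by norm_cast; simp
  simp only [dotProduct, Fin.sum_univ_three, ψ, Pi.star_apply, star_div₀, star_one,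
    Complex.star_def, Complex.conj_ofReal]
  field_simp
  linear_combination -h3

theorem Mobs_posSemidef (k : Fin 5) : (Mobs k).PosSemidef := by
  have hhalf : (0 : ℂ) ≤ 1 / 2 := by positivity
  have hQ := isStarProjection_vecMulVec_star star_ψ_dotProduct_ψ
  fin_cases k
  · exact (isStarProjection_single_one _).posSemidef_smul hhalf
  · exact (isStarProjection_single_one _).posSemidef_smul hhalf
  · exact (isStarProjection_single_one _).posSemidef_smul hhalf
  · exact hQ.posSemidef_smul hhalf
  · simpa [Mobs, Beff, smul_sub] using hQ.one_sub.posSemidef_smul hhalf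

theorem sum_Mobs : ∑ k, Mobs k = 1 := by
  have h := (sum_single_one : ∑ i : Fin 3, single i i (1 : ℂ) = 1)
  rw [Fin.sum_univ_three] at h
  simp only [Fin.sum_univ_five, Mobs, Matrix.cons_val]
  rw [← h]
  module

theorem Mobs_castLE (j : Fin 3) :
    Mobs (Fin.castLE (by norm_num) j) = (1 / 2 : ℂ) • single j j 1 := by
  fin_cases j <;> rfl

theorem Aeff_eq_sum_Mobs (i : Fin 3) :
    Aeff i = ∑ l ∈ ({i}ᶜ : Finset (Fin 3)).map (Fin.castLEEmb (by norm_num)), Mobs l := by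
  simp only [sum_map, Fin.castLEEmb_apply, Mobs_castLE, ← smul_sum,
    sum_compl_eq_sub_of_sum_eq (sum_single_one (α := ℂ)), sum_singleton, Aeff]

theorem sum_Aeff : ∑ i, Aeff i = 1 := by
  simp only [Aeff, ← smul_sum, sum_sub_distrib, sum_single_one, sum_const, card_univ,
    Fintype.card_fin]
  module

theorem sum_Beff_one_sub : ∑ j, ![Beff, 1 - Beff] j = 1 := by
  simp

theorem exists_Beff_one_sub_eq_sum_Mobs (j : Fin 2) :
    ∃ Z : Finset (Fin 5), ![Beff, 1 - Beff] j = ∑ l ∈ Z, Mobs l := by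
  fin_cases j
  · exact ⟨{3}, by simp [Mobs]⟩
  · refine ⟨{3}ᶜ, ?_⟩
    rw [sum_compl_eq_sub_of_sum_eq sum_Mobs, sum_singleton]
    rfl

/-- `M` is a POVM, every subset-sum of the effects of `A` and of `B` is a subset-sum of the
effects of `M`, and in particular `A` and `B` are coexistent. -/
theorem Mobs_witnesses_coexistence :
    IsPOVM Mobs ∧
    (∀ X : Finset (Fin 3), ∃ Z : Finset (Fin 5), ∑ i ∈ X, Aeff i = ∑ l ∈ Z, Mobs l) ∧
    (∀ Y : Finset (Fin 2), ∃ Z : Finset (Fin 5),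
      ∑ j ∈ Y, (![Beff, 1 - Beff]) j = ∑ l ∈ Z, Mobs l) ∧
    Coexistent Aeff ![Beff, 1 - Beff] := by
  have hM : IsPOVM Mobs := isPOVM_of_posSemidef Mobs_posSemidef sum_Mobs
  have hA := exists_sum_eq_sum_of_card_le_three (by simp) sum_Aeff sum_Mobs
    fun i => ⟨_, Aeff_eq_sum_Mobs i⟩
  have hB := exists_sum_eq_sum_of_card_le_three (by simp) sum_Beff_one_sub sum_Mobs
    exists_Beff_one_sub_eq_sum_Mobs
  exact ⟨hM, hA, hB, 5, Mobs, hM, hA, hB⟩
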